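/- (Initialization bound.) Suppose the activation σ is ℓ-Lipschitz, the width m is even, exactly half of the second-layer signs a_j equal +1 and half equal −1, and the data points x_1,…,x_{ñ} ∈ ℝ^d satisfy ‖x_i‖ ≤ R. Let the initialization w_0 ∈ ℝ^{md} have i.i.d. standard Gaussian entries. Then for any δ ∈ (0,1), with probability at least 1 − δ over w_0, |Φ(w_0, x_i)| ≤ ℓR·√(2·log(2ñ/δ)) for all i ∈ {1,…,ñ}. -/

import Mathlib

open scoped BigOperators
open MeasureTheory

/-- Two-layer network `Φ(w,x) = (1/√m) ∑_j a_j σ(⟨w_j, x⟩)`. -/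
noncomputable def Phi {m d : ℕ} (a : Fin m → ℝ) (σ : ℝ → ℝ)
    (w : EuclideanSpace ℝ (Fin m × Fin d)) (x : EuclideanSpace ℝ (Fin d)) : ℝ :=
  (1 / Real.sqrt m) * ∑ j : Fin m, a j * σ (∑ i : Fin d, w (j, i) * x i)

/-- Standard Gaussian measure on a finite-dimensional Euclidean space
(i.i.d. standard Gaussian coordinates). -/
noncomputable def stdGaussian (ι : Type*) [Fintype ι] :
    Measure (EuclideanSpace ℝ ι) :=
  Measure.map (WithLp.equiv 2 (ι → ℝ)).symm
    (Measure.pi fun _ : ι => ProbabilityTheory.gaussianReal 0 1)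

/-!
Fix `s` and put `c = s / √m`. The rows `w_j` of `w₀` are independent and each `⟨w_j, x⟩` has law
`N(0, ‖x‖²)`, so with `Y ~ N(0, ‖x‖²)` the moment `E[exp (s Φ(w₀, x))]` factors as
`∏ⱼ E[exp (c aⱼ σ(Y))]`, and since the signs are balanced this is
`(E[exp (c σ(Y))] · E[exp (-c σ(Y))]) ^ (m / 2)`. For an independent copy `Y'` of `Y`, the factor
in parentheses is `E[exp (c (σ(Y) - σ(Y')))]`; it is symmetric under `Y ↔ Y'`, hence equal to
`E[cosh (c (σ(Y) - σ(Y')))] ≤ E[cosh (c ℓ (Y - Y'))] = exp (c² ℓ² ‖x‖²)`. Thus every output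
`Φ(w₀, xᵢ)` is sub-Gaussian with variance proxy `ℓ² R²`; the two-sided Chernoff bound gives
`P(|Φ(w₀, xᵢ)| > ℓ R √(2 log (2ñ/δ))) ≤ δ / ñ`, and a union bound over the `ñ` points concludes.
-/

open Real ProbabilityTheory
open scoped ENNReal NNReal

lemma stdGaussian_eq_probabilityTheory_stdGaussian (ι : Type*) [Fintype ι] :
    stdGaussian ι = ProbabilityTheory.stdGaussian (EuclideanSpace ℝ ι) :=
  map_pi_eq_stdGaussian

instance (ι : Type*) [Fintype ι] : IsProbabilityMeasure (stdGaussian ι) := by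
  rw [stdGaussian_eq_probabilityTheory_stdGaussian]; infer_instance

lemma map_pi_gaussianReal_sum_mul {ι : Type*} [Fintype ι] (x : EuclideanSpace ℝ ι) :
    (Measure.pi fun _ : ι => gaussianReal 0 1).map (fun u => ∑ i, u i * x i)
      = gaussianReal 0 (‖x‖₊ ^ 2) := by
  have hS : (fun u : ι → ℝ => ∑ i, u i * x i) = innerSL ℝ x ∘ WithLp.toLp 2 := by
    ext u; simp [PiLp.inner_apply, mul_comm]
  rw [hS, ← Measure.map_map (by fun_prop) (by fun_prop), map_pi_eq_stdGaussian,
    IsGaussian.map_eq_gaussianReal, integral_strongDual_stdGaussian,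
    variance_dual_stdGaussian, innerSL_apply_norm]
  congr
  ext; simp

lemma measurePreserving_curry_pi {ι κ X : Type*} [Fintype ι] [Fintype κ] [MeasurableSpace X]
    (μ : Measure X) [IsProbabilityMeasure μ] :
    MeasurePreserving (MeasurableEquiv.curry ι κ X) (Measure.pi fun _ => μ)
      (Measure.pi fun _ => Measure.pi fun _ => μ) := by
  refine ⟨by fun_prop, ?_⟩
  have := Measure.infinitePi_map_curry (ι := ι) (κ := κ) (fun _ _ => μ)
  simpa only [Measure.infinitePi_eq_pi] using this

lemma lintegral_fintype_prod_eq_prod {ι : Type*} [Fintype ι] {X : ι → Type*}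
    [∀ i, MeasurableSpace (X i)] (μ : ∀ i, Measure (X i)) [∀ i, IsProbabilityMeasure (μ i)]
    {f : ∀ i, X i → ℝ≥0∞} (hf : ∀ i, Measurable (f i)) :
    ∫⁻ x, ∏ i, f i (x i) ∂Measure.pi μ = ∏ i, ∫⁻ y, f i y ∂μ i := by
  rw [lintegral_prod_eq_prod_lintegral_of_indepFun _ _
    (iIndepFun_pi fun i => (hf i).aemeasurable) fun i => (hf i).comp (measurable_pi_apply i)]
  exact Finset.prod_congr rfl fun i _ => (measurePreserving_eval μ i).lintegral_comp (hf i)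

lemma lintegral_exp_mul_gaussianReal (μ : ℝ) (v : ℝ≥0) (t : ℝ) :
    ∫⁻ y, ENNReal.ofReal (exp (t * y)) ∂gaussianReal μ v
      = ENNReal.ofReal (exp (μ * t + v * t ^ 2 / 2)) := by
  rw [← ofReal_integral_eq_lintegral_ofReal (integrable_exp_mul_gaussianReal t)
    (Filter.Eventually.of_forall fun y => (exp_pos _).le), ← congrFun mgf_id_gaussianReal t]
  rfl

lemma exp_add_exp_neg_le_of_abs_le {a b : ℝ} (h : |a| ≤ |b|) :
    exp a + exp (-a) ≤ exp b + exp (-b) := by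
  have := cosh_le_cosh.mpr h
  rw [cosh_eq, cosh_eq] at this
  linarith

lemma lintegral_exp_mul_lintegral_exp_neg_le {α : Type*} [MeasurableSpace α] (μ : Measure α)
    [SFinite μ] {f g : α → ℝ} (hf : Measurable f) (hg : Measurable g)
    (hfg : ∀ y z, |f y - f z| ≤ |g y - g z|) (c : ℝ) :
    (∫⁻ y, ENNReal.ofReal (exp (c * f y)) ∂μ) * ∫⁻ y, ENNReal.ofReal (exp (-c * f y)) ∂μ
      ≤ (∫⁻ y, ENNReal.ofReal (exp (c * g y)) ∂μ) * ∫⁻ y, ENNReal.ofReal (exp (-c * g y)) ∂μ := by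
  set E : (α → ℝ) → α × α → ℝ≥0∞ := fun h p => ENNReal.ofReal (exp (c * (h p.1 - h p.2)))
  have hprod : ∀ h : α → ℝ, Measurable h →
      (∫⁻ y, ENNReal.ofReal (exp (c * h y)) ∂μ) * ∫⁻ y, ENNReal.ofReal (exp (-c * h y)) ∂μ
        = ∫⁻ p, E h p ∂μ.prod μ := by
    intro h hh
    rw [← lintegral_prod_mul (by fun_prop) (by fun_prop)]
    congr 1 with p
    rw [← ENNReal.ofReal_mul (exp_pos _).le, ← exp_add, neg_mul, ← sub_eq_add_neg, ← mul_sub]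
  have hswap : ∀ h : α → ℝ, ∫⁻ p, E h p ∂μ.prod μ = ∫⁻ p, E h p.swap ∂μ.prod μ := fun h =>
    (lintegral_prod_swap (E h)).symm
  have hsymm : ∀ p, E f p + E f p.swap ≤ E g p + E g p.swap := by
    intro p
    simp only [E, Prod.fst_swap, Prod.snd_swap, ← ENNReal.ofReal_add (exp_pos _).le
      (exp_pos _).le]
    refine ENNReal.ofReal_le_ofReal ?_
    rw [show c * (f p.2 - f p.1) = -(c * (f p.1 - f p.2)) by ring,
      show c * (g p.2 - g p.1) = -(c * (g p.1 - g p.2)) by ring]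
    refine exp_add_exp_neg_le_of_abs_le ?_
    rw [abs_mul, abs_mul]
    exact mul_le_mul_of_nonneg_left (hfg _ _) (abs_nonneg c)
  have hEg : Measurable (E g) := by fun_prop
  rw [hprod f hf, hprod g hg, ← ENNReal.mul_le_mul_iff_right two_ne_zero ENNReal.ofNat_ne_top,
    two_mul, two_mul]
  calc _ = ∫⁻ p, E f p ∂μ.prod μ + ∫⁻ p, E f p.swap ∂μ.prod μ := by rw [← hswap]
    _ ≤ ∫⁻ p, E f p + E f p.swap ∂μ.prod μ := le_lintegral_add _ _
    _ ≤ ∫⁻ p, E g p + E g p.swap ∂μ.prod μ := lintegral_mono hsymm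
    _ = _ := by rw [lintegral_add_left hEg, ← hswap]

lemma LipschitzWith.lintegral_exp_mul_lintegral_exp_neg_gaussianReal_le {K : ℝ≥0} {σ : ℝ → ℝ}
    (hσ : LipschitzWith K σ) (μ : ℝ) (v : ℝ≥0) (c : ℝ) :
    (∫⁻ y, ENNReal.ofReal (exp (c * σ y)) ∂gaussianReal μ v)
        * ∫⁻ y, ENNReal.ofReal (exp (-c * σ y)) ∂gaussianReal μ v
      ≤ ENNReal.ofReal (exp (v * (c * K) ^ 2)) := by
  have hσK : ∀ y z, |σ y - σ z| ≤ |K * y - K * z| := fun y z => by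
    rw [← mul_sub, abs_mul, NNReal.abs_eq, ← Real.dist_eq, ← Real.dist_eq]
    exact hσ.dist_le_mul y z
  refine (lintegral_exp_mul_lintegral_exp_neg_le _ hσ.continuous.measurable
    (measurable_const_mul _) hσK c).trans_eq ?_
  simp_rw [← mul_assoc, lintegral_exp_mul_gaussianReal,
    ← ENNReal.ofReal_mul (exp_pos _).le, ← exp_add]
  ring_nf

lemma prod_apply_eq_pow_of_balanced_signs {ι M : Type*} [Fintype ι] [CommMonoid M] (f : ℝ → M)
    {a : ι → ℝ} (ha : ∀ j, a j = 1 ∨ a j = -1)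
    (hhalf : (Finset.univ.filter fun j => a j = 1).card = Fintype.card ι / 2)
    (heven : Even (Fintype.card ι)) :
    ∏ j, f (a j) = (f 1 * f (-1)) ^ (Fintype.card ι / 2) := by
  have hminus : (Finset.univ.filter fun j => ¬ a j = 1).card = Fintype.card ι / 2 := by
    have := Finset.card_filter_add_card_filter_not (s := Finset.univ) (p := fun j => a j = 1)
    rw [Finset.card_univ, hhalf] at this
    have := Nat.div_two_mul_two_of_even heven
    omega
  rw [← Finset.prod_filter_mul_prod_filter_not Finset.univ (fun j => a j = 1),
    Finset.prod_congr rfl fun j hj => congrArg f (Finset.mem_filter.mp hj).2,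
    Finset.prod_congr rfl fun j hj =>
      congrArg f ((ha j).resolve_left (Finset.mem_filter.mp hj).2),
    Finset.prod_const, Finset.prod_const, hhalf, hminus, mul_pow]

lemma continuous_Phi {m d : ℕ} (a : Fin m → ℝ) {σ : ℝ → ℝ} (hσ : Continuous σ)
    (x : EuclideanSpace ℝ (Fin d)) : Continuous fun w => Phi a σ w x := by
  unfold Phi
  fun_prop

lemma lintegral_exp_mul_Phi_le {m d : ℕ} {a : Fin m → ℝ} (ha : ∀ j, a j = 1 ∨ a j = -1)
    (hhalf : (Finset.univ.filter fun j : Fin m => a j = 1).card = m / 2) (hm : Even m)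
    {K : ℝ≥0} {σ : ℝ → ℝ} (hσ : LipschitzWith K σ) (x : EuclideanSpace ℝ (Fin d)) (s : ℝ) :
    ∫⁻ w, ENNReal.ofReal (exp (s * Phi a σ w x)) ∂stdGaussian (Fin m × Fin d)
      ≤ ENNReal.ofReal (exp ((K * ‖x‖) ^ 2 * s ^ 2 / 2)) := by
  set c := s / √m
  set I : ℝ → ℝ≥0∞ := fun t => ∫⁻ y, ENNReal.ofReal (exp (t * σ y)) ∂gaussianReal 0 (‖x‖₊ ^ 2)
  set F : ℝ → (Fin d → ℝ) → ℝ≥0∞ := fun t u => ENNReal.ofReal (exp (c * t * σ (∑ i, u i * x i)))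
  have hσm : Measurable σ := hσ.continuous.measurable
  have hF : ∀ t, Measurable (F t) := fun t => by fun_prop
  have hfactor : ∀ w : Fin m × Fin d → ℝ, ENNReal.ofReal (exp (s * Phi a σ (WithLp.toLp 2 w) x))
      = ∏ j, F (a j) (Function.curry w j) := by
    intro w
    rw [← ENNReal.ofReal_prod_of_nonneg fun j _ => (exp_pos _).le, ← exp_sum, Phi,
      ← mul_assoc, Finset.mul_sum]
    congr 2
    refine Finset.sum_congr rfl fun j _ => ?_
    simp only [c, Function.curry]
    ring
  have hrow : ∀ t, ∫⁻ u, F t u ∂Measure.pi (fun _ => gaussianReal 0 1) = I (c * t) := by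
    intro t
    simp only [I]
    rw [← map_pi_gaussianReal_sum_mul x, lintegral_map (by fun_prop) (by fun_prop)]
  have hexp : ((m / 2 : ℕ) : ℝ) * (‖x‖₊ ^ 2 * (c * K) ^ 2 : ℝ) ≤ (K * ‖x‖) ^ 2 * s ^ 2 / 2 := by
    obtain rfl | hm0 := eq_or_ne m 0
    · simp only [Nat.zero_div, Nat.cast_zero, zero_mul]
      positivity
    · have hc : c ^ 2 = s ^ 2 / m := by
        simp only [c]
        rw [div_pow, sq_sqrt (Nat.cast_nonneg m)]
      rw [Nat.cast_div hm.two_dvd two_ne_zero, mul_pow, hc, coe_nnnorm]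
      refine le_of_eq ?_
      push_cast
      field_simp
  calc ∫⁻ w, ENNReal.ofReal (exp (s * Phi a σ w x)) ∂stdGaussian (Fin m × Fin d)
      = ∫⁻ w, ∏ j, F (a j) (Function.curry w j) ∂Measure.pi fun _ => gaussianReal 0 1 := by
        have hΦ := (continuous_Phi a hσ.continuous x).measurable
        exact (lintegral_map (hΦ.const_mul s).exp.ennreal_ofReal (WithLp.measurable_toLp 2 _)).trans
          (lintegral_congr hfactor)
    _ = ∫⁻ v, ∏ j, F (a j) (v j) ∂Measure.pi fun _ => Measure.pi fun _ => gaussianReal 0 1 :=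
        (measurePreserving_curry_pi _).lintegral_comp
          (Finset.measurable_prod _ fun j _ => (hF _).comp (measurable_pi_apply j))
    _ = ∏ j, I (c * a j) := by
        rw [lintegral_fintype_prod_eq_prod _ fun j => hF _]
        simp_rw [hrow]
    _ = (I c * I (-c)) ^ (m / 2) := by
        simpa using prod_apply_eq_pow_of_balanced_signs (fun t => I (c * t)) ha
          (by simpa using hhalf) (by simpa using hm)
    _ ≤ ENNReal.ofReal (exp (‖x‖₊ ^ 2 * (c * K) ^ 2)) ^ (m / 2) := by
        gcongr
        exact hσ.lintegral_exp_mul_lintegral_exp_neg_gaussianReal_le 0 _ c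
    _ ≤ _ := by
        rw [← ENNReal.ofReal_pow (exp_pos _).le, ← exp_nat_mul]
        exact ENNReal.ofReal_le_ofReal (exp_le_exp.2 hexp)

lemma hasSubgaussianMGF_of_lintegral_exp_le {Ω : Type*} [MeasurableSpace Ω] {μ : Measure Ω}
    {X : Ω → ℝ} {c : ℝ≥0} (hX : AEMeasurable X μ)
    (h : ∀ t, ∫⁻ ω, ENNReal.ofReal (exp (t * X ω)) ∂μ ≤ ENNReal.ofReal (exp (c * t ^ 2 / 2))) :
    HasSubgaussianMGF X c μ where
  integrable_exp_mul t := by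
    refine ⟨by fun_prop, ?_⟩
    rw [hasFiniteIntegral_iff_ofReal (ae_of_all _ fun _ => (exp_pos _).le)]
    exact (h t).trans_lt ENNReal.ofReal_lt_top
  mgf_le t := by
    rw [mgf, integral_eq_lintegral_of_nonneg_ae (ae_of_all _ fun _ => (exp_pos _).le)
      (by fun_prop)]
    exact ENNReal.toReal_le_of_le_ofReal (exp_pos _).le (h t)

lemma ProbabilityTheory.HasSubgaussianMGF.measureReal_abs_gt_le {Ω : Type*} [MeasurableSpace Ω]
    {μ : Measure Ω} [IsFiniteMeasure μ] {X : Ω → ℝ} {c : ℝ≥0} (h : HasSubgaussianMGF X c μ) {η : ℝ}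
    (hη : 0 < η) (hη2 : η ≤ 2) :
    μ.real {ω | √(2 * c * log (2 / η)) < |X ω|} ≤ η := by
  obtain rfl | hc := eq_or_ne c 0
  · have hnull : μ {ω | √(2 * ((0 : ℝ≥0) : ℝ) * log (2 / η)) < |X ω|} = 0 := by
      rw [measure_eq_zero_iff_ae_notMem]
      filter_upwards [h.ae_eq_zero_of_hasSubgaussianMGF_zero] with ω hω
      simp [hω]
    rw [measureReal_def, hnull, ENNReal.toReal_zero]
    exact hη.le
  set ε := √(2 * c * log (2 / η))
  have hlog : 0 ≤ log (2 / η) := log_nonneg (by rw [le_div_iff₀ hη]; linarith)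
  have hε : ε ^ 2 / (2 * c) = log (2 / η) := by
    rw [sq_sqrt (by positivity)]
    field_simp
  have hsub : {ω | ε < |X ω|} ⊆ {ω | ε ≤ X ω} ∪ {ω | ε ≤ (-X) ω} :=
    fun ω (hω : ε < |X ω|) => le_abs.mp hω.le
  calc μ.real {ω | ε < |X ω|}
      ≤ μ.real {ω | ε ≤ X ω} + μ.real {ω | ε ≤ (-X) ω} :=
        (measureReal_mono hsub).trans (measureReal_union_le _ _)
    _ ≤ exp (-ε ^ 2 / (2 * c)) + exp (-ε ^ 2 / (2 * c)) :=
        add_le_add (h.measure_ge_le (sqrt_nonneg _)) (h.neg.measure_ge_le (sqrt_nonneg _))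
    _ = η := by
        rw [neg_div, hε, exp_neg, exp_log (by positivity)]
        field_simp
        ring

lemma one_sub_card_mul_le_measureReal_forall {Ω ι : Type*} [MeasurableSpace Ω] {μ : Measure Ω}
    [IsProbabilityMeasure μ] [Fintype ι] (p : ι → Ω → Prop) {η : ℝ}
    (h : ∀ i, μ.real {ω | ¬ p i ω} ≤ η) :
    1 - Fintype.card ι * η ≤ μ.real {ω | ∀ i, p i ω} := by
  have hcompl : {ω | ∀ i, p i ω}ᶜ = ⋃ i, {ω | ¬ p i ω} := by
    ext
    simp
  have hsplit := measureReal_union_le (μ := μ) {ω | ∀ i, p i ω} {ω | ∀ i, p i ω}ᶜ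
  rw [Set.union_compl_self, probReal_univ, hcompl] at hsplit
  have hunion := (measureReal_iUnion_fintype_le (μ := μ) _).trans
    (Finset.sum_le_sum fun i (_ : i ∈ Finset.univ) => h i)
  rw [Finset.sum_const, Finset.card_univ, nsmul_eq_mul] at hunion
  linarith

/-- high-probability bound on the model output at Gaussian
initialization. -/
theorem initialization_bound
    {m d nt : ℕ} (ℓ R : ℝ)
    (a : Fin m → ℝ) (ha : ∀ j, a j = 1 ∨ a j = -1)
    -- half of the second-layer signs are +1 and half are −1
    (hhalf : (Finset.univ.filter fun j : Fin m => a j = 1).card = m / 2)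
    (hm : Even m)
    (σ : ℝ → ℝ) (hσlip : ∀ u v : ℝ, |σ u - σ v| ≤ ℓ * |u - v|)
    (x : Fin nt → EuclideanSpace ℝ (Fin d)) (hx : ∀ i, ‖x i‖ ≤ R)
    (δ : ℝ) (hδ : δ ∈ Set.Ioo (0 : ℝ) 1) :
    stdGaussian (Fin m × Fin d)
      {w₀ | ∀ i : Fin nt,
        |Phi a σ w₀ (x i)| ≤ ℓ * R * Real.sqrt (2 * Real.log (2 * nt / δ))}
      ≥ ENNReal.ofReal (1 - δ) := by
  obtain ⟨hδ0, hδ1⟩ := hδ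
  have hℓ : 0 ≤ ℓ := (abs_nonneg _).trans ((hσlip 1 0).trans_eq (by norm_num))
  have hσ : LipschitzWith ℓ.toNNReal σ := LipschitzWith.of_dist_le' hσlip
  have htail : ∀ i, (stdGaussian (Fin m × Fin d)).real
      {w | ¬ |Phi a σ w (x i)| ≤ ℓ * R * √(2 * log (2 * nt / δ))} ≤ δ / nt := by
    intro i
    have hR : 0 ≤ R := (norm_nonneg _).trans (hx i)
    have hnt : (1 : ℝ) ≤ nt := by exact_mod_cast i.pos
    have hsubgaussian : HasSubgaussianMGF (fun w => Phi a σ w (x i)) ((ℓ * R) ^ 2).toNNReal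
        (stdGaussian (Fin m × Fin d)) := by
      refine hasSubgaussianMGF_of_lintegral_exp_le
        (continuous_Phi a hσ.continuous _).measurable.aemeasurable fun s => ?_
      refine (lintegral_exp_mul_Phi_le ha hhalf hm hσ (x i) s).trans
        (ENNReal.ofReal_le_ofReal (exp_le_exp.2 ?_))
      rw [Real.coe_toNNReal _ (sq_nonneg _), Real.coe_toNNReal _ hℓ]
      gcongr
      exact hx i
    have hT : ℓ * R * √(2 * log (2 * nt / δ))
        = √(2 * ((ℓ * R) ^ 2).toNNReal * log (2 / (δ / nt))) := by
      rw [Real.coe_toNNReal _ (sq_nonneg _), div_div_eq_mul_div,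
        show 2 * (ℓ * R) ^ 2 * log (2 * nt / δ) = (ℓ * R) ^ 2 * (2 * log (2 * nt / δ)) by ring,
        sqrt_mul (sq_nonneg _), sqrt_sq (mul_nonneg hℓ hR)]
    simpa only [hT, not_le] using hsubgaussian.measureReal_abs_gt_le (by positivity)
      (by rw [div_le_iff₀ (by positivity)]; linarith)
  have hforall := one_sub_card_mul_le_measureReal_forall _ htail
  rw [Fintype.card_fin] at hforall
  rw [ge_iff_le, ← ofReal_measureReal]
  refine ENNReal.ofReal_le_ofReal ((sub_le_sub_left ?_ 1).trans hforall)
  obtain rfl | hnt := eq_or_ne nt 0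
  · simpa using hδ0.le
  · rw [mul_div_cancel₀ _ (by positivity)]
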